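/- For all vectors a, b in H and all q ∈ [0,1], the q-numerical radius (computed on the Hilbert space H ⊕ H) of the block-diagonal operator T on H ⊕ H defined by T(x, y) = ((a⊗b)x, 0) = (⟨x,a⟩·b, 0) equals the q-numerical radius of a⊗b on H. -/

import Mathlib

open scoped ComplexInnerProductSpace

/-- The rank-one operator `a ⊗ b` on a complex Hilbert space, acting by
`(a ⊗ b) x = ⟨x, a⟩ · b` (i.e. `x ↦ ⟪a, x⟫ • b` in Mathlib's convention, where the
inner product is conjugate-linear in the first slot). -/
noncomputable def rankOne {H : Type*} [NormedAddCommGroup H] [InnerProductSpace ℂ H]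
    (a b : H) : H →L[ℂ] H :=
  (innerSL ℂ a).smulRight b

/-- The `q`-numerical radius `ω_q(A) = sup { |⟨Ax, y⟩| : ‖x‖ = ‖y‖ = 1, ⟨x, y⟩ = q }`. -/
noncomputable def qRad {H : Type*} [NormedAddCommGroup H] [InnerProductSpace ℂ H]
    (q : ℝ) (A : H →L[ℂ] H) : ℝ :=
  sSup {r : ℝ | ∃ x y : H, ‖x‖ = 1 ∧ ‖y‖ = 1 ∧ ⟪x, y⟫ = (q : ℂ) ∧ r = ‖⟪A x, y⟫‖}

/-!
For a unit vector `x`, the largest `‖⟪v, y⟫‖` over unit vectors `y` with `⟪x, y⟫ = q` is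
`q ‖⟪x, v⟫‖ + √(1 - q²) ‖v - ⟪x, v⟫ x‖`: split `v` and `y` along `x` and apply Cauchy–Schwarz to the
orthogonal parts, with equality for a suitable `y` once `dim H ≥ 2`. For a unit `X = (x₁, x₂)` and
`v = T X = ⟪a, x₁⟫ (b, 0)` this bound is `‖⟪a, x₁⟫‖ (q ‖⟪x₁, b⟫‖ + √(1 - q²) √(‖b‖² - ‖⟪x₁, b⟫‖²))`
with `‖x₁‖ ≤ 1`. Pushing `x₁` out to the unit sphere along a direction orthogonal to `b`, in one of
the two directions, keeps `⟪x₁, b⟫` and does not decrease `‖⟪a, x₁⟫‖` (convexity), so the bound is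
attained by `a ⊗ b` on `H`. The reverse inequality comes from embedding `H` as `H ⊕ 0`.
-/

theorem norm_le_max_norm_add_smul {F : Type*} [SeminormedAddCommGroup F] [NormedSpace ℝ F]
    (c d : F) {t₁ t₂ : ℝ} (h₁ : t₁ ≤ 0) (h₂ : 0 ≤ t₂) :
    ‖c‖ ≤ max ‖c + t₁ • d‖ ‖c + t₂ • d‖ := by
  have hconv := (convexOn_norm convex_univ).comp_affineMap
    (AffineMap.lineMap c (c + d) : ℝ →ᵃ[ℝ] F)
  have := hconv.le_on_segment (Set.mem_univ t₁) (Set.mem_univ t₂)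
    (by rw [segment_eq_Icc (h₁.trans h₂)]; exact ⟨h₁, h₂⟩)
  simpa [AffineMap.lineMap_apply, add_comm] using this

section InnerProductSpace

variable {E : Type*} [NormedAddCommGroup E] [InnerProductSpace ℂ E]

theorem exists_norm_eq_one_inner_eq_zero (hdim : 2 ≤ Module.rank ℂ E) (v : E) :
    ∃ w : E, ‖w‖ = 1 ∧ ⟪v, w⟫ = 0 := by
  have hne : (ℂ ∙ v)ᗮ ≠ ⊥ := by
    rw [Ne, Submodule.orthogonal_eq_bot_iff]
    intro htop
    have h := rank_span_le (R := ℂ) ({v} : Set E)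
    rw [htop, rank_top, Cardinal.mk_singleton] at h
    exact absurd (hdim.trans h) (by norm_num)
  obtain ⟨u, hu, hu0⟩ := Submodule.exists_mem_ne_zero_of_ne_bot hne
  refine ⟨(‖u‖⁻¹ : ℂ) • u, norm_smul_inv_norm hu0, ?_⟩
  rw [inner_smul_right, Submodule.mem_orthogonal_singleton_iff_inner_right.mp hu, mul_zero]

theorem inner_sub_inner_smul_self {x : E} (hx : ‖x‖ = 1) (v : E) :
    ⟪x, v - ⟪x, v⟫ • x⟫ = 0 := by
  rw [inner_sub_right, inner_smul_right, inner_self_eq_one_of_norm_eq_one hx, mul_one, sub_self]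

theorem norm_sub_inner_smul_sq {x : E} (hx : ‖x‖ = 1) (v : E) :
    ‖v - ⟪x, v⟫ • x‖ ^ 2 = ‖v‖ ^ 2 - ‖⟪x, v⟫‖ ^ 2 := by
  rw [@norm_sub_sq ℂ, inner_smul_right, ← inner_conj_symm x v, RCLike.conj_mul, norm_smul,
    RCLike.norm_conj, hx]
  norm_cast
  ring

theorem inner_eq_inner_mul_inner_add {x : E} (hx : ‖x‖ = 1) (v y : E) :
    ⟪v, y⟫ = ⟪v, x⟫ * ⟪x, y⟫ + ⟪v - ⟪x, v⟫ • x, y - ⟪x, y⟫ • x⟫ := by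
  rw [inner_sub_left, inner_sub_right, inner_sub_right, inner_smul_left, inner_smul_left,
    inner_smul_right, inner_smul_right, inner_self_eq_one_of_norm_eq_one hx, inner_conj_symm]
  ring

theorem exists_norm_eq_one_inner_eq_zero_inner_eq_norm (hdim : 2 ≤ Module.rank ℂ E) {x : E}
    (hx : ‖x‖ = 1) (v : E) :
    ∃ z : E, ‖z‖ = 1 ∧ ⟪x, z⟫ = 0 ∧ ⟪v, z⟫ = ‖v - ⟪x, v⟫ • x‖ := by
  have hperp : ∀ z, ⟪x, z⟫ = 0 → ⟪v, z⟫ = ⟪v - ⟪x, v⟫ • x, z⟫ := fun z hz ↦ by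
    rw [inner_eq_inner_mul_inner_add hx v z, hz, zero_smul, sub_zero, mul_zero, zero_add]
  by_cases hv : v - ⟪x, v⟫ • x = 0
  · obtain ⟨z, hz, hxz⟩ := exists_norm_eq_one_inner_eq_zero hdim x
    refine ⟨z, hz, hxz, ?_⟩
    rw [hperp z hxz, hv, inner_zero_left, norm_zero, Complex.ofReal_zero]
  · refine ⟨(‖v - ⟪x, v⟫ • x‖⁻¹ : ℂ) • (v - ⟪x, v⟫ • x), norm_smul_inv_norm hv, ?_, ?_⟩
    · rw [inner_smul_right, inner_sub_inner_smul_self hx, mul_zero]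
    · rw [hperp _ (by rw [inner_smul_right, inner_sub_inner_smul_self hx, mul_zero]),
        inner_smul_right, inner_self_eq_norm_sq_to_K]
      have : (‖v - ⟪x, v⟫ • x‖ : ℂ) ≠ 0 := by exact_mod_cast norm_ne_zero_iff.mpr hv
      field_simp
      norm_cast

noncomputable def qInnerMax (q : ℝ) (v x : E) : ℝ :=
  q * ‖⟪x, v⟫‖ + √(1 - q ^ 2) * √(‖v‖ ^ 2 - ‖⟪x, v⟫‖ ^ 2)

theorem sqrt_sub_sq_eq_norm {x : E} (hx : ‖x‖ = 1) (v : E) :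
    √(‖v‖ ^ 2 - ‖⟪x, v⟫‖ ^ 2) = ‖v - ⟪x, v⟫ • x‖ := by
  rw [← norm_sub_inner_smul_sq hx, Real.sqrt_sq (norm_nonneg _)]

theorem norm_inner_le_qInnerMax {q : ℝ} (hq : 0 ≤ q) {x y : E} (hx : ‖x‖ = 1) (hy : ‖y‖ = 1)
    (hxy : ⟪x, y⟫ = q) (v : E) : ‖⟪v, y⟫‖ ≤ qInnerMax q v x := by
  have hyperp : ‖y - ⟪x, y⟫ • x‖ = √(1 - q ^ 2) := by
    rw [← sqrt_sub_sq_eq_norm hx, hy, hxy, Complex.norm_real, Real.norm_of_nonneg hq, one_pow]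
  calc ‖⟪v, y⟫‖ ≤ ‖⟪v, x⟫‖ * ‖⟪x, y⟫‖ + ‖v - ⟪x, v⟫ • x‖ * ‖y - ⟪x, y⟫ • x‖ := by
        rw [inner_eq_inner_mul_inner_add hx v y, ← norm_mul]
        grw [norm_add_le, norm_inner_le_norm]
    _ = qInnerMax q v x := by
        rw [qInnerMax, hyperp, ← sqrt_sub_sq_eq_norm hx, hxy, Complex.norm_real,
          Real.norm_of_nonneg hq, norm_inner_symm]
        ring

theorem exists_inner_eq_norm_inner_eq_qInnerMax (hdim : 2 ≤ Module.rank ℂ E) {q : ℝ}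
    (hq : q ∈ Set.Icc (0 : ℝ) 1) {x : E} (hx : ‖x‖ = 1) (v : E) :
    ∃ y : E, ‖y‖ = 1 ∧ ⟪x, y⟫ = q ∧ ‖⟪v, y⟫‖ = qInnerMax q v x := by
  obtain ⟨z, hz, hxz, hvz⟩ := exists_norm_eq_one_inner_eq_zero_inner_eq_norm hdim hx v
  set p := √(1 - q ^ 2)
  have hp : p ^ 2 = 1 - q ^ 2 := Real.sq_sqrt (by nlinarith [hq.1, hq.2])
  -- the phase of `⟪v, x⟫`, so that both components of `⟪v, y⟫` below point the same way
  set s := Complex.exp (Complex.arg ⟪v, x⟫ * Complex.I)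
  have hs : ‖s‖ = 1 := Complex.norm_exp_ofReal_mul_I _
  refine ⟨(q : ℂ) • x + (p * s : ℂ) • z, ?_, ?_, ?_⟩
  · have horth : ⟪(q : ℂ) • x, (p * s : ℂ) • z⟫ = 0 := by
      rw [inner_smul_left, inner_smul_right, hxz, mul_zero, mul_zero]
    have h := norm_add_sq_eq_norm_sq_add_norm_sq_of_inner_eq_zero _ _ horth
    rw [norm_smul, norm_smul, hx, hz, norm_mul, hs, Complex.norm_real, Complex.norm_real,
      Real.norm_of_nonneg hq.1, Real.norm_of_nonneg (Real.sqrt_nonneg _)] at h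
    rw [← pow_eq_one_iff_of_nonneg (norm_nonneg _) two_ne_zero, sq, h]
    linear_combination hp
  · rw [inner_add_right, inner_smul_right, inner_smul_right,
      inner_self_eq_one_of_norm_eq_one hx, hxz]
    ring
  · have hvy : ⟪v, (q : ℂ) • x + (p * s : ℂ) • z⟫
        = s * ↑(q * ‖⟪v, x⟫‖ + p * ‖v - ⟪x, v⟫ • x‖) := by
      rw [inner_add_right, inner_smul_right, inner_smul_right, hvz]
      push_cast
      linear_combination (q : ℂ) * (Complex.norm_mul_exp_arg_mul_I ⟪v, x⟫).symm
    have hnonneg : 0 ≤ q * ‖⟪v, x⟫‖ + p * ‖v - ⟪x, v⟫ • x‖ :=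
      add_nonneg (mul_nonneg hq.1 (norm_nonneg _)) (mul_nonneg (Real.sqrt_nonneg _) (norm_nonneg _))
    rw [hvy, norm_mul, hs, one_mul, Complex.norm_real, Real.norm_of_nonneg hnonneg, qInnerMax,
      sqrt_sub_sq_eq_norm hx, norm_inner_symm]

theorem exists_norm_eq_one_inner_eq_norm_inner_le (hdim : 2 ≤ Module.rank ℂ E) (a b : E) {x : E}
    (hx : ‖x‖ ≤ 1) : ∃ x' : E, ‖x'‖ = 1 ∧ ⟪x', b⟫ = ⟪x, b⟫ ∧ ‖⟪a, x⟫‖ ≤ ‖⟪a, x'⟫‖ := by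
  obtain ⟨z, hz, hbz⟩ := exists_norm_eq_one_inner_eq_zero hdim b
  set r := ⟪x, z⟫.re
  -- `x + t z` is a unit vector exactly when `(t + r)² = s²`, and `-r - s ≤ 0 ≤ -r + s`
  set s := √(r ^ 2 + 1 - ‖x‖ ^ 2)
  have hs : s ^ 2 = r ^ 2 + 1 - ‖x‖ ^ 2 := Real.sq_sqrt (by nlinarith [norm_nonneg x])
  have hrs : |r| ≤ s := Real.abs_le_sqrt (by nlinarith [norm_nonneg x])
  have hnorm : ∀ t : ℝ, (t + r) ^ 2 = s ^ 2 → ‖x + (t : ℂ) • z‖ = 1 := fun t ht ↦ by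
    rw [← pow_eq_one_iff_of_nonneg (norm_nonneg _) two_ne_zero, @norm_add_sq ℂ,
      inner_smul_right, norm_smul, hz, Complex.norm_real, Real.norm_eq_abs, mul_one, sq_abs,
      RCLike.re_to_complex, Complex.re_ofReal_mul]
    linear_combination ht + hs
  have hb : ∀ t : ℝ, ⟪x + (t : ℂ) • z, b⟫ = ⟪x, b⟫ := fun t ↦ by
    rw [inner_add_left, inner_smul_left, inner_eq_zero_symm.mp hbz, mul_zero, add_zero]
  have ha : ∀ t : ℝ, ⟪a, x + (t : ℂ) • z⟫ = ⟪a, x⟫ + t • ⟪a, z⟫ := fun t ↦ by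
    rw [inner_add_right, inner_smul_right, Complex.real_smul]
  have hmax := norm_le_max_norm_add_smul ⟪a, x⟫ ⟪a, z⟫ (t₁ := -r - s) (t₂ := -r + s)
    (by linarith [neg_abs_le r]) (by linarith [le_abs_self r])
  rcases le_max_iff.mp hmax with h | h
  · exact ⟨_, hnorm (-r - s) (by ring), hb _, by rwa [ha]⟩
  · exact ⟨_, hnorm (-r + s) (by ring), hb _, by rwa [ha]⟩

theorem qInnerMax_smul (q : ℝ) (c : ℂ) (v x : E) :
    qInnerMax q (c • v) x = ‖c‖ * qInnerMax q v x := by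
  have hsub : ‖c • v‖ ^ 2 - ‖⟪x, c • v⟫‖ ^ 2 = ‖c‖ ^ 2 * (‖v‖ ^ 2 - ‖⟪x, v⟫‖ ^ 2) := by
    rw [inner_smul_right, norm_smul, norm_mul]; ring
  rw [qInnerMax, qInnerMax, hsub, Real.sqrt_mul (sq_nonneg _), Real.sqrt_sq (norm_nonneg _),
    inner_smul_right, norm_mul]
  ring

theorem norm_inner_le_qRad {q : ℝ} (S : E →L[ℂ] E) {x y : E} (hx : ‖x‖ = 1) (hy : ‖y‖ = 1)
    (hxy : ⟪x, y⟫ = q) : ‖⟪S x, y⟫‖ ≤ qRad q S := by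
  refine le_csSup ⟨‖S‖, ?_⟩ ⟨x, y, hx, hy, hxy, rfl⟩
  rintro _ ⟨x, y, hx, hy, -, rfl⟩
  calc ‖⟪S x, y⟫‖ ≤ ‖S x‖ * ‖y‖ := norm_inner_le_norm _ _
    _ ≤ ‖S‖ * ‖x‖ * ‖y‖ := by gcongr; exact S.le_opNorm x
    _ = ‖S‖ := by rw [hx, hy, mul_one, mul_one]

theorem qRad_le {q c : ℝ} (S : E →L[ℂ] E)
    (hne : ∃ x y : E, ‖x‖ = 1 ∧ ‖y‖ = 1 ∧ ⟪x, y⟫ = q)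
    (h : ∀ x y : E, ‖x‖ = 1 → ‖y‖ = 1 → ⟪x, y⟫ = q → ‖⟪S x, y⟫‖ ≤ c) : qRad q S ≤ c := by
  obtain ⟨x, y, hx, hy, hxy⟩ := hne
  refine csSup_le ⟨_, x, y, hx, hy, hxy, rfl⟩ ?_
  rintro _ ⟨x, y, hx, hy, hxy, rfl⟩
  exact h x y hx hy hxy

theorem exists_norm_eq_one_inner_eq (hdim : 2 ≤ Module.rank ℂ E) {q : ℝ}
    (hq : q ∈ Set.Icc (0 : ℝ) 1) : ∃ x y : E, ‖x‖ = 1 ∧ ‖y‖ = 1 ∧ ⟪x, y⟫ = q := by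
  obtain ⟨x, hx, -⟩ := exists_norm_eq_one_inner_eq_zero hdim (0 : E)
  obtain ⟨y, hy, hxy, -⟩ := exists_inner_eq_norm_inner_eq_qInnerMax hdim hq hx 0
  exact ⟨x, y, hx, hy, hxy⟩

theorem norm_inner_rankOne_apply (a b x y : E) :
    ‖⟪rankOne a b x, y⟫‖ = ‖⟪a, x⟫‖ * ‖⟪b, y⟫‖ := by
  simp only [rankOne, ContinuousLinearMap.smulRight_apply, innerSL_apply_apply, inner_smul_left,
    norm_mul, RCLike.norm_conj]

theorem norm_inner_mul_qInnerMax_le_qRad_rankOne (hdim : 2 ≤ Module.rank ℂ E) {q : ℝ}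
    (hq : q ∈ Set.Icc (0 : ℝ) 1) (a b : E) {x : E} (hx : ‖x‖ ≤ 1) :
    ‖⟪a, x⟫‖ * qInnerMax q b x ≤ qRad q (rankOne a b) := by
  obtain ⟨x', hx', hx'b, hax'⟩ := exists_norm_eq_one_inner_eq_norm_inner_le hdim a b hx
  obtain ⟨y, hy, hx'y, hby⟩ := exists_inner_eq_norm_inner_eq_qInnerMax hdim hq hx' b
  have hmax : qInnerMax q b x' = qInnerMax q b x := by rw [qInnerMax, qInnerMax, hx'b]
  calc ‖⟪a, x⟫‖ * qInnerMax q b x ≤ ‖⟪a, x'⟫‖ * qInnerMax q b x' :=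
        hmax ▸ mul_le_mul_of_nonneg_right hax' (hby ▸ norm_nonneg _)
    _ = ‖⟪rankOne a b x', y⟫‖ := by rw [norm_inner_rankOne_apply, hby]
    _ ≤ qRad q (rankOne a b) := norm_inner_le_qRad _ hx' hy hx'y

end InnerProductSpace

theorem qInnerMax_toLp_fst {H H' : Type*} [NormedAddCommGroup H] [InnerProductSpace ℂ H]
    [NormedAddCommGroup H'] [InnerProductSpace ℂ H'] (q : ℝ) (b : H) (X : WithLp 2 (H × H')) :
    qInnerMax q (WithLp.toLp 2 (b, (0 : H'))) X = qInnerMax q b X.fst := by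
  simp [qInnerMax]

theorem stmt5_general {H : Type*} [NormedAddCommGroup H] [InnerProductSpace ℂ H]
    (hdim : 2 ≤ Module.rank ℂ H) (a b : H) (q : ℝ) (hq : q ∈ Set.Icc (0 : ℝ) 1)
    (T : WithLp 2 (H × H) →L[ℂ] WithLp 2 (H × H))
    (hT : ∀ x y : H,
      T ((WithLp.equiv 2 (H × H)).symm (x, y)) =
        (WithLp.equiv 2 (H × H)).symm ((rankOne a b) x, 0)) :
    qRad q T = qRad q (rankOne a b) := by
  have hTX (X : WithLp 2 (H × H)) : T X = ⟪a, X.fst⟫ • WithLp.toLp 2 (b, (0 : H)) := by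
    refine (hT X.fst X.snd).trans ?_
    rw [← WithLp.toLp_smul, Prod.smul_mk, smul_zero]
    rfl
  obtain ⟨x₀, y₀, hx₀, hy₀, hx₀y₀⟩ := exists_norm_eq_one_inner_eq hdim hq (E := H)
  apply le_antisymm
  · refine qRad_le T ⟨WithLp.toLp 2 (x₀, 0), WithLp.toLp 2 (y₀, 0), by simpa using hx₀,
      by simpa using hy₀, by simpa using hx₀y₀⟩ fun X Y hX hY hXY ↦ ?_
    calc ‖⟪T X, Y⟫‖ ≤ qInnerMax q (T X) X := norm_inner_le_qInnerMax hq.1 hX hY hXY _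
      _ = ‖⟪a, X.fst⟫‖ * qInnerMax q b X.fst := by
        rw [hTX, qInnerMax_smul, qInnerMax_toLp_fst]
      _ ≤ qRad q (rankOne a b) :=
        norm_inner_mul_qInnerMax_le_qRad_rankOne hdim hq a b
          ((WithLp.norm_fst_le H X).trans hX.le)
  · refine qRad_le _ ⟨x₀, y₀, hx₀, hy₀, hx₀y₀⟩ fun x y hx hy hxy ↦ ?_
    have h := norm_inner_le_qRad T (x := WithLp.toLp 2 (x, 0)) (y := WithLp.toLp 2 (y, 0))
      (by simpa using hx) (by simpa using hy) (by simpa using hxy)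
    simpa [hTX, rankOne, inner_smul_left] using h

/-- The `q`-numerical radius of the block-diagonal operator `T(x, y) = ((a ⊗ b) x, 0)`
on `H ⊕ H` equals the `q`-numerical radius of `a ⊗ b` on `H`. -/
theorem stmt5 {H : Type*} [NormedAddCommGroup H] [InnerProductSpace ℂ H] [CompleteSpace H]
    (hdim : 2 ≤ Module.rank ℂ H) (a b : H) (q : ℝ) (hq : q ∈ Set.Icc (0 : ℝ) 1)
    (T : WithLp 2 (H × H) →L[ℂ] WithLp 2 (H × H))
    (hT : ∀ x y : H,
      T ((WithLp.equiv 2 (H × H)).symm (x, y)) =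
        (WithLp.equiv 2 (H × H)).symm ((rankOne a b) x, 0)) :
    qRad q T = qRad q (rankOne a b) :=
  stmt5_general hdim a b q hq T hT
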